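/- One-step contraction of SPPM-OC: under μ-strong monotonicity and δ-expected similarity, the iterate x^{k+1} = (I + γA_{ξ^k})^{-1}(x^k + γ(a^k_{ξ^k} − a^k)), where a^k = E_ξ[a_ξ^k] ∈ A(x^k) and a_ξ^k ∈ A_ξ(x^k), satisfies E[‖x^{k+1} − x⋆‖² | F^k] ≤ (1 + γ²δ²)/(1+γμ)² · ‖x^k − x⋆‖². -/

import Mathlib

/-!
Since `a⋆_ξ ∈ A_ξ(x⋆)`, the point `x⋆` is the resolvent of `γA_ξ` at `x⋆ + γa⋆_ξ`, and strong
monotonicity makes that resolvent a `(1 + γμ)⁻¹`-contraction. Hence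
`(1 + γμ)² ‖x^{k+1} - x⋆‖² ≤ ‖(x^k - x⋆) + γ (a^k_ξ - a^k - a⋆_ξ)‖²`. The noise
`a^k_ξ - a^k - a⋆_ξ` has mean zero, so in expectation the cross term drops out and the square
term is bounded by expected similarity.
-/

open RealInnerProductSpace MeasureTheory

section Resolvent

variable {X : Type*} [NormedAddCommGroup X] [InnerProductSpace ℝ X]

def IsStronglyMonotone (μ : ℝ) (T : X → Set X) : Prop :=
  ∀ x u y v, u ∈ T x → v ∈ T y → μ * ‖x - y‖ ^ 2 ≤ ⟪u - v, x - y⟫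

/-- `J` is a selection of the resolvent `(I + γT)⁻¹`. -/
def IsResolvent (γ : ℝ) (T : X → Set X) (J : X → X) : Prop :=
  ∀ z, ∃ u ∈ T (J z), z - J z = γ • u

variable {T : X → Set X} {μ γ : ℝ}

theorem IsStronglyMonotone.mul_norm_sub_le (hT : IsStronglyMonotone μ T) (hγ : 0 ≤ γ)
    {x u y v : X} (hu : u ∈ T x) (hv : v ∈ T y) :
    (1 + γ * μ) * ‖x - y‖ ≤ ‖(x + γ • u) - (y + γ • v)‖ := by
  set d := x - y
  set e := (x + γ • u) - (y + γ • v)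
  have he : e = d + γ • (u - v) := by simp only [e, d, smul_sub]; abel
  have hlower : (1 + γ * μ) * ‖d‖ ^ 2 ≤ ⟪e, d⟫ := by
    have hmono := mul_le_mul_of_nonneg_left (hT x u y v hu hv) hγ
    rw [he, inner_add_left, real_inner_smul_left, real_inner_self_eq_norm_sq]
    linarith
  have hsq : (1 + γ * μ) * ‖d‖ * ‖d‖ ≤ ‖e‖ * ‖d‖ := by
    nlinarith [real_inner_le_norm e d]
  rcases (norm_nonneg d).eq_or_lt with hd | hd
  · rw [← hd, mul_zero]
    exact norm_nonneg e
  · exact le_of_mul_le_mul_right hsq hd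

variable {J : X → X}

theorem IsResolvent.mul_norm_sub_le (hJ : IsResolvent γ T J) (hT : IsStronglyMonotone μ T)
    (hγ : 0 ≤ γ) (z : X) {x u : X} (hu : u ∈ T x) :
    (1 + γ * μ) * ‖J z - x‖ ≤ ‖z - (x + γ • u)‖ := by
  obtain ⟨u', hu', hz⟩ := hJ z
  have := hT.mul_norm_sub_le hγ hu' hu
  rwa [← eq_add_of_sub_eq' hz] at this

theorem IsResolvent.apply_add_smul_eq (hJ : IsResolvent γ T J) (hT : IsStronglyMonotone μ T)
    (hγ : 0 ≤ γ) (hγμ : 0 < 1 + γ * μ) {x u : X} (hu : u ∈ T x) : J (x + γ • u) = x := by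
  have := hJ.mul_norm_sub_le hT hγ (x + γ • u) hu
  rw [sub_self, norm_zero] at this
  exact sub_eq_zero.mp (norm_le_zero_iff.mp (nonpos_of_mul_nonpos_right this hγμ))

theorem IsResolvent.sq_norm_sub_le (hJ : IsResolvent γ T J) (hT : IsStronglyMonotone μ T)
    (hγ : 0 ≤ γ) (hγμ : 0 < 1 + γ * μ) (z : X) {x u : X} (hu : u ∈ T x) :
    ‖J z - x‖ ^ 2 ≤ ‖z - (x + γ • u)‖ ^ 2 / (1 + γ * μ) ^ 2 := by
  rw [le_div_iff₀ (by positivity), ← mul_pow, mul_comm]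
  exact pow_le_pow_left₀ (by positivity) (hJ.mul_norm_sub_le hT hγ z hu) 2

end Resolvent

section MeanZeroNoise

variable {Ω E : Type*} [MeasurableSpace Ω] {P : Measure Ω}
  [NormedAddCommGroup E] [InnerProductSpace ℝ E] {v : Ω → E}

theorem norm_add_smul_sq (w y : E) (c : ℝ) :
    ‖w + c • y‖ ^ 2 = ‖w‖ ^ 2 + 2 * c * ⟪w, y⟫ + c ^ 2 * ‖y‖ ^ 2 := by
  rw [norm_add_sq_real, real_inner_smul_right, norm_smul, mul_pow, Real.norm_eq_abs, sq_abs]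
  ring

theorem integrable_norm_add_smul_sq [IsFiniteMeasure P] (w : E) (c : ℝ) (hv : Integrable v P)
    (hv2 : Integrable (fun ξ => ‖v ξ‖ ^ 2) P) :
    Integrable (fun ξ => ‖w + c • v ξ‖ ^ 2) P := by
  simp only [norm_add_smul_sq]
  exact ((integrable_const _).add ((hv.const_inner w).const_mul _)).add (hv2.const_mul _)

theorem integral_norm_add_smul_sq [CompleteSpace E] [IsProbabilityMeasure P] (w : E) (c : ℝ)
    (hv : Integrable v P) (hv2 : Integrable (fun ξ => ‖v ξ‖ ^ 2) P)
    (hmean : ∫ ξ, v ξ ∂P = 0) :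
    ∫ ξ, ‖w + c • v ξ‖ ^ 2 ∂P = ‖w‖ ^ 2 + c ^ 2 * ∫ ξ, ‖v ξ‖ ^ 2 ∂P := by
  have hcross : Integrable (fun ξ => 2 * c * ⟪w, v ξ⟫) P := (hv.const_inner w).const_mul _
  have hlinear : Integrable (fun ξ => ‖w‖ ^ 2 + 2 * c * ⟪w, v ξ⟫) P :=
    (integrable_const _).add hcross
  simp only [norm_add_smul_sq]
  rw [integral_add hlinear (hv2.const_mul _),
    integral_add (integrable_const _) hcross, integral_const_mul, integral_const_mul,
    integral_inner hv, hmean]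
  simp

end MeanZeroNoise

theorem sppm_oc_one_step_general {X : Type*} [NormedAddCommGroup X] [InnerProductSpace ℝ X]
    [FiniteDimensional ℝ X]
    {Ω : Type*} [MeasurableSpace Ω] (P : Measure Ω) [IsProbabilityMeasure P]
    (A : Ω → X → Set X) (μ γ δ : ℝ) (hμ : 0 < μ) (hγ : 0 < γ)
    (hmono : ∀ ξ x u y v, u ∈ A ξ x → v ∈ A ξ y → μ * ‖x - y‖ ^ 2 ≤ ⟪u - v, x - y⟫)
    (J : Ω → X → X) (hJ : ∀ ξ z, ∃ u ∈ A ξ (J ξ z), z - J ξ z = γ • u)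
    (xstar : X) (astar : Ω → X) (hastar : ∀ ξ, astar ξ ∈ A ξ xstar)
    (hmeanstar : ∫ ξ, astar ξ ∂P = 0)
    (xk : X) (aξ : Ω → X)
    (abar : X) (habar : abar = ∫ ξ, aξ ξ ∂P)
    (hsim : ∫ ξ, ‖aξ ξ - abar - astar ξ‖ ^ 2 ∂P ≤ δ ^ 2 * ‖xk - xstar‖ ^ 2)
    (hint0 : Integrable astar P) (hint1 : Integrable aξ P)
    (hint2 : Integrable (fun ξ => ‖aξ ξ - abar - astar ξ‖ ^ 2) P)
    (hint3 : Integrable (fun ξ => ‖J ξ (xk + γ • (aξ ξ - abar)) - xstar‖ ^ 2) P) :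
    ∫ ξ, ‖J ξ (xk + γ • (aξ ξ - abar)) - xstar‖ ^ 2 ∂P ≤
      (1 + γ ^ 2 * δ ^ 2) / (1 + γ * μ) ^ 2 * ‖xk - xstar‖ ^ 2 := by
  have hγμ : 0 < 1 + γ * μ := by positivity
  have hcentered : Integrable (fun ξ => aξ ξ - abar) P := hint1.sub (integrable_const abar)
  have hnoise : Integrable (fun ξ => aξ ξ - abar - astar ξ) P := hcentered.sub hint0
  have hnoise_mean : ∫ ξ, aξ ξ - abar - astar ξ ∂P = 0 := by
    rw [integral_sub hcentered hint0,
      integral_sub hint1 (integrable_const abar), integral_const, hmeanstar, ← habar]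
    simp
  have hstep (ξ : Ω) : ‖J ξ (xk + γ • (aξ ξ - abar)) - xstar‖ ^ 2 ≤
      ‖(xk - xstar) + γ • (aξ ξ - abar - astar ξ)‖ ^ 2 / (1 + γ * μ) ^ 2 := by
    have h := IsResolvent.sq_norm_sub_le (hJ ξ) (hmono ξ) hγ.le hγμ (xk + γ • (aξ ξ - abar)) (hastar ξ)
    rwa [show xk + γ • (aξ ξ - abar) - (xstar + γ • astar ξ) =
      (xk - xstar) + γ • (aξ ξ - abar - astar ξ) by simp only [smul_sub]; abel] at h
  calc ∫ ξ, ‖J ξ (xk + γ • (aξ ξ - abar)) - xstar‖ ^ 2 ∂P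
      ≤ ∫ ξ, ‖(xk - xstar) + γ • (aξ ξ - abar - astar ξ)‖ ^ 2 / (1 + γ * μ) ^ 2 ∂P :=
        integral_mono hint3
          ((integrable_norm_add_smul_sq _ γ hnoise hint2).div_const _) hstep
    _ = (‖xk - xstar‖ ^ 2 + γ ^ 2 * ∫ ξ, ‖aξ ξ - abar - astar ξ‖ ^ 2 ∂P) / (1 + γ * μ) ^ 2 := by
        rw [integral_div, integral_norm_add_smul_sq _ γ hnoise hint2 hnoise_mean]
    _ ≤ (‖xk - xstar‖ ^ 2 + γ ^ 2 * (δ ^ 2 * ‖xk - xstar‖ ^ 2)) / (1 + γ * μ) ^ 2 := by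
        gcongr
    _ = (1 + γ ^ 2 * δ ^ 2) / (1 + γ * μ) ^ 2 * ‖xk - xstar‖ ^ 2 := by ring

/-- One-step contraction of SPPM with operator correction (SPPM-OC). -/
theorem sppm_oc_one_step {X : Type*} [NormedAddCommGroup X] [InnerProductSpace ℝ X]
    [FiniteDimensional ℝ X]
    {Ω : Type*} [MeasurableSpace Ω] (P : Measure Ω) [IsProbabilityMeasure P]
    (A : Ω → X → Set X) (μ γ δ : ℝ) (hμ : 0 < μ) (hγ : 0 < γ) (hδ : 0 < δ)
    (hmono : ∀ ξ x u y v, u ∈ A ξ x → v ∈ A ξ y → μ * ‖x - y‖ ^ 2 ≤ ⟪u - v, x - y⟫)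
    (J : Ω → X → X) (hJ : ∀ ξ z, ∃ u ∈ A ξ (J ξ z), z - J ξ z = γ • u)
    (xstar : X) (astar : Ω → X) (hastar : ∀ ξ, astar ξ ∈ A ξ xstar)
    (hmeanstar : ∫ ξ, astar ξ ∂P = 0)
    (xk : X) (aξ : Ω → X) (haξ : ∀ ξ, aξ ξ ∈ A ξ xk)
    (abar : X) (habar : abar = ∫ ξ, aξ ξ ∂P)
    (hsim : ∫ ξ, ‖aξ ξ - abar - astar ξ‖ ^ 2 ∂P ≤ δ ^ 2 * ‖xk - xstar‖ ^ 2)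
    (hint0 : Integrable astar P) (hint1 : Integrable aξ P)
    (hint2 : Integrable (fun ξ => ‖aξ ξ - abar - astar ξ‖ ^ 2) P)
    (hint3 : Integrable (fun ξ => ‖J ξ (xk + γ • (aξ ξ - abar)) - xstar‖ ^ 2) P) :
    ∫ ξ, ‖J ξ (xk + γ • (aξ ξ - abar)) - xstar‖ ^ 2 ∂P ≤
      (1 + γ ^ 2 * δ ^ 2) / (1 + γ * μ) ^ 2 * ‖xk - xstar‖ ^ 2 :=
  sppm_oc_one_step_general P A μ γ δ hμ hγ hmono J hJ xstar astar hastar hmeanstar xk aξ abar habar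
    hsim hint0 hint1 hint2 hint3
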